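/- arXiv:math/0305441 — 5 statements merged into one kernel-verified Lean document; each statement's English description precedes it below -/
import Mathlib

section
/- Let P be a finitely generated torsion-free commutative cancellative monoid, V = ℚ ⊗ P^gp, and C(P) the rational cone generated by the image of P in V. If F is a face of P, then C(F) is a face of C(P). -/
/-- The rational cone `C(X)` generated by a subset `X` of a `ℚ`-vector space: all finite
nonnegative rational combinations of elements of `X`. -/
def rationalCone {V : Type*} [AddCommGroup V] [Module ℚ V] (X : Set V) : Set V :=
  {v | ∃ (n : ℕ) (q : Fin n → ℚ) (p : Fin n → V),
    (∀ i, 0 ≤ q i) ∧ (∀ i, p i ∈ X) ∧ v = ∑ i, q i • p i}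

/-- `F` is a face of the monoid `P`: a submonoid such that `p + p' ∈ F` implies `p ∈ F`. -/
def IsMonoidFace {V : Type*} [AddCommGroup V] [Module ℚ V] (P F : AddSubmonoid V) : Prop :=
  F ≤ P ∧ ∀ p ∈ P, ∀ q ∈ P, p + q ∈ F → p ∈ F

lemma cone_clear_denom {V : Type*} [AddCommGroup V] [Module ℚ V] (M : AddSubmonoid V)
    (v : V) (hv : v ∈ rationalCone (M : Set V)) : ∃ N : ℕ, 0 < N ∧ (N : ℚ) • v ∈ M := by
  obtain ⟨n, q, p, hq, hp, rfl⟩ := hv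
  refine ⟨∏ i, (q i).den, Finset.prod_pos fun i _ => (q i).pos, ?_⟩
  rw [Finset.smul_sum]
  refine AddSubmonoid.sum_mem _ fun i _ => ?_
  have hdvd : (q i).den ∣ ∏ j, (q j).den := Finset.dvd_prod_of_mem _ (Finset.mem_univ i)
  have key : ((∏ j, (q j).den : ℕ) : ℚ) * q i
      = (((∏ j, (q j).den) / (q i).den * (q i).num.toNat : ℕ) : ℚ) := by
    obtain ⟨c, hc⟩ := hdvd
    rw [hc]
    rw [Nat.mul_div_cancel_left _ (q i).pos]
    have hnum : (((q i).num.toNat : ℕ) : ℚ) = ((q i).num : ℚ) := by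
      exact_mod_cast congrArg (Int.cast : ℤ → ℚ) (Int.toNat_of_nonneg (Rat.num_nonneg.2 (hq i)))
    have hden : ((q i).den : ℚ) * q i = ((q i).num : ℚ) := by
      have h := Rat.num_div_den (q i)
      rw [div_eq_iff (by exact_mod_cast (q i).den_ne_zero : ((q i).den : ℚ) ≠ 0)] at h
      rw [mul_comm]; exact h.symm
    push_cast
    rw [hnum, mul_right_comm, hden, mul_comm]
  rw [smul_smul, key, Nat.cast_smul_eq_nsmul]
  exact AddSubmonoid.nsmul_mem _ (hp i) _

/-- Let `P` be a finitely generated torsion-free commutative cancellative monoid, embedded in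
`V = ℚ ⊗ P^gp`, and let `C(P)` be the rational cone it generates. If `F` is a face of `P`,
then `C(F)` is a face of the cone `C(P)`. -/
theorem cone_of_face_is_face {V : Type*} [AddCommGroup V] [Module ℚ V]
    (P : AddSubmonoid V) (hfg : P.FG)
    (hspan : Submodule.span ℚ (P : Set V) = ⊤)
    (F : AddSubmonoid V) (hF : IsMonoidFace P F) :
    rationalCone (F : Set V) ⊆ rationalCone (P : Set V) ∧
    ∀ x ∈ rationalCone (P : Set V), ∀ y ∈ rationalCone (P : Set V),
      x + y ∈ rationalCone (F : Set V) → x ∈ rationalCone (F : Set V) := by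
  constructor
  · rintro v ⟨n, q, p, hq, hp, rfl⟩
    exact ⟨n, q, p, hq, fun i => hF.1 (hp i), rfl⟩
  · intro x hx y hy hxy
    obtain ⟨N1, hN1, h1⟩ := cone_clear_denom P x hx
    obtain ⟨N2, hN2, h2⟩ := cone_clear_denom P y hy
    obtain ⟨N3, hN3, h3⟩ := cone_clear_denom F _ hxy
    
    have hxP : ((N1 * N2 * N3 : ℕ) : ℚ) • x ∈ P := by
      have : ((N1 * N2 * N3 : ℕ) : ℚ) • x = (N2 * N3) • ((N1 : ℚ) • x) := by
        rw [← Nat.cast_smul_eq_nsmul ℚ, smul_smul]; congr 1; push_cast; ring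
      rw [this]; exact AddSubmonoid.nsmul_mem _ h1 _
    have hyP : ((N1 * N2 * N3 : ℕ) : ℚ) • y ∈ P := by
      have : ((N1 * N2 * N3 : ℕ) : ℚ) • y = (N1 * N3) • ((N2 : ℚ) • y) := by
        rw [← Nat.cast_smul_eq_nsmul ℚ, smul_smul]; congr 1; push_cast; ring
      rw [this]; exact AddSubmonoid.nsmul_mem _ h2 _
    have hsF : ((N1 * N2 * N3 : ℕ) : ℚ) • x + ((N1 * N2 * N3 : ℕ) : ℚ) • y ∈ F := by
      have : ((N1 * N2 * N3 : ℕ) : ℚ) • x + ((N1 * N2 * N3 : ℕ) : ℚ) • y = (N1 * N2) • ((N3 : ℚ) • (x + y)) := by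
        rw [← Nat.cast_smul_eq_nsmul ℚ, smul_smul, ← smul_add]; congr 1; push_cast; ring
      rw [this]; exact AddSubmonoid.nsmul_mem _ h3 _
    have hxF : ((N1 * N2 * N3 : ℕ) : ℚ) • x ∈ F := hF.2 _ hxP _ hyP hsF
    refine ⟨1, fun _ => ((N1 * N2 * N3 : ℕ) : ℚ)⁻¹, fun _ => ((N1 * N2 * N3 : ℕ) : ℚ) • x, ?_, fun _ => hxF, ?_⟩
    · intro _; positivity
    · rw [Fin.sum_univ_one, smul_smul, inv_mul_cancel₀ (by positivity), one_smul]
end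

section
/- Let P be a finitely generated torsion-free commutative cancellative monoid embedded in V = ℚ ⊗ P^gp, and C(P) the cone it generates. If F is a face of P, then P ∩ C(F) = F; and if G is a face of C(P), then C(P ∩ G) = G. Hence F ↦ C(F) is a bijection between faces of P and faces of C(P). -/
/-- `G` is a face of the cone `C`: a subcone (containing `0`, closed under addition and
nonnegative rational scaling) such that `x + y ∈ G` with `x, y ∈ C` implies `x ∈ G`. -/
def IsConeFace {V : Type*} [AddCommGroup V] [Module ℚ V] (C G : Set V) : Prop :=
  G ⊆ C ∧ (0 : V) ∈ G ∧ (∀ x ∈ G, ∀ y ∈ G, x + y ∈ G) ∧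
    (∀ (q : ℚ), 0 ≤ q → ∀ x ∈ G, q • x ∈ G) ∧
    ∀ x ∈ C, ∀ y ∈ C, x + y ∈ G → x ∈ G

/-! Clearing denominators, every `x ∈ C(F)` has a multiple `d • x ∈ F` with `d > 0`; for `x ∈ P`
the face property applied to `x + (d - 1) • x ∈ F` then gives `x ∈ F`. For a face `G` of `C(P)`,
induct over the nonnegative combinations of elements of `P` that produce a point of `G`: the face
property sends both summands of a sum in `G` to `G`, and a positive multiple in `G` forces the
point itself into `G`, so every generator used lies in `P ∩ G`. -/

section

variable {V : Type*} [AddCommGroup V] [Module ℚ V]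

theorem rationalCone_eq_hull (X : Set V) : rationalCone X = PointedCone.hull ℚ X := by
  ext v
  rw [SetLike.mem_coe, Submodule.mem_span_set']
  constructor
  · rintro ⟨n, q, p, hq, hp, rfl⟩
    exact ⟨n, fun i => ⟨q i, hq i⟩, fun i => ⟨p i, hp i⟩, rfl⟩
  · rintro ⟨n, c, p, rfl⟩
    exact ⟨n, fun i => c i, fun i => p i, fun i => (c i).2, fun i => (p i).2, rfl⟩

theorem exists_pos_nsmul_mem_of_mem_rationalCone (F : AddSubmonoid V) {x : V}
    (hx : x ∈ rationalCone (F : Set V)) : ∃ d : ℕ, 0 < d ∧ d • x ∈ F := by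
  rw [rationalCone_eq_hull] at hx
  induction hx using Submodule.span_induction with
  | mem x hx => exact ⟨1, one_pos, by rwa [one_nsmul]⟩
  | zero => exact ⟨1, one_pos, by rw [smul_zero]; exact F.zero_mem⟩
  | add x y _ _ hx hy =>
    obtain ⟨d, hd, hdx⟩ := hx
    obtain ⟨e, he, hey⟩ := hy
    refine ⟨d * e, Nat.mul_pos hd he, ?_⟩
    rw [nsmul_add, mul_nsmul, mul_nsmul']
    exact F.add_mem (F.nsmul_mem hdx e) (F.nsmul_mem hey d)
  | smul c x _ hx =>
    obtain ⟨d, hd, hdx⟩ := hx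
    refine ⟨(c : ℚ).den * d, Nat.mul_pos (c : ℚ).den_pos hd, ?_⟩
    have hnum : (((c : ℚ).num.toNat : ℕ) : ℚ) = (c : ℚ).den * c := by
      have : (((c : ℚ).num.toNat : ℕ) : ℚ) = (c : ℚ).num := by
        exact_mod_cast Int.toNat_of_nonneg (Rat.num_nonneg.2 c.2)
      rw [this, Rat.den_mul_eq_num]
    have : ((c : ℚ).den * d) • (c • x) = (c : ℚ).num.toNat • (d • x) := by
      rw [← Nat.cast_smul_eq_nsmul ℚ, ← Nat.cast_smul_eq_nsmul ℚ, ← Nat.cast_smul_eq_nsmul ℚ d,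
        ← Nonneg.coe_smul, smul_smul, smul_smul, hnum]
      push_cast; ring_nf
    rw [this]
    exact F.nsmul_mem hdx _

theorem IsMonoidFace.mem_of_nsmul_mem {P F : AddSubmonoid V} (hF : IsMonoidFace P F) {x : V}
    (hx : x ∈ P) {d : ℕ} (hd : 0 < d) (hdx : d • x ∈ F) : x ∈ F := by
  obtain ⟨e, rfl⟩ := Nat.exists_eq_add_of_lt hd
  exact hF.2 x hx (e • x) (P.nsmul_mem hx e) (by simpa [add_nsmul, add_comm] using hdx)

theorem IsConeFace.rationalCone_subset {C G X : Set V} (hG : IsConeFace C G) (hX : X ⊆ G) :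
    rationalCone X ⊆ G := by
  rw [rationalCone_eq_hull]
  intro x hx
  induction hx using Submodule.span_induction with
  | mem x hx => exact hX hx
  | zero => exact hG.2.1
  | add x y _ _ hx hy => exact hG.2.2.1 x hx y hy
  | smul c x _ hx => exact hG.2.2.2.1 c c.2 x hx

theorem IsConeFace.subset_rationalCone_inter {X G : Set V} (hG : IsConeFace (rationalCone X) G) :
    G ⊆ rationalCone (X ∩ G) := by
  obtain ⟨hGC, -, -, hGsmul, hGface⟩ := hG
  simp only [rationalCone_eq_hull, SetLike.mem_coe] at hGC hGface ⊢
  intro g hg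
  induction hGC hg using Submodule.span_induction with
  | mem x hx => exact Submodule.subset_span ⟨hx, hg⟩
  | zero => exact zero_mem _
  | add x y hx hy ihx ihy =>
    have hxG : x ∈ G := hGface x hx y hy hg
    have hyG : y ∈ G := hGface y hy x hx (add_comm x y ▸ hg)
    exact add_mem (ihx hxG) (ihy hyG)
  | smul c x _ ih =>
    rcases c.2.eq_or_lt with hc | hc
    · rw [← Nonneg.coe_smul, ← hc, zero_smul]
      exact zero_mem _
    · have hxG : x ∈ G := by
        have := hGsmul (c : ℚ)⁻¹ (inv_nonneg.2 c.2) ((c : ℚ) • x) hg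
        rwa [smul_smul, inv_mul_cancel₀ hc.ne', one_smul] at this
      exact Submodule.smul_mem _ c (ih hxG)

end

theorem faces_of_monoid_biject_faces_of_cone_general {V : Type*} [AddCommGroup V] [Module ℚ V]
    (P : AddSubmonoid V) :
    (∀ F : AddSubmonoid V, IsMonoidFace P F →
      (P : Set V) ∩ rationalCone (F : Set V) = (F : Set V)) ∧
    (∀ G : Set V, IsConeFace (rationalCone (P : Set V)) G →
      rationalCone ((P : Set V) ∩ G) = G) := by
  refine ⟨fun F hF => ?_, fun G hG => ?_⟩
  · refine Set.Subset.antisymm (fun x ⟨hxP, hxF⟩ => ?_) fun x hx => ⟨hF.1 hx, ?_⟩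
    · obtain ⟨d, hd, hdx⟩ := exists_pos_nsmul_mem_of_mem_rationalCone F hxF
      exact hF.mem_of_nsmul_mem hxP hd hdx
    · rw [rationalCone_eq_hull]
      exact Submodule.subset_span hx
  · exact Set.Subset.antisymm (hG.rationalCone_subset Set.inter_subset_right)
      hG.subset_rationalCone_inter

/-- Let `P` be a finitely generated torsion-free commutative cancellative monoid embedded in
`V = ℚ ⊗ P^gp`, and `C(P)` the cone it generates. If `F` is a face of `P` then
`P ∩ C(F) = F`, and if `G` is a face of `C(P)` then `C(P ∩ G) = G`. Hence `F ↦ C(F)` is a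
bijection between the faces of `P` and the faces of `C(P)`. -/
theorem faces_of_monoid_biject_faces_of_cone {V : Type*} [AddCommGroup V] [Module ℚ V]
    (P : AddSubmonoid V) (hfg : P.FG)
    (hspan : Submodule.span ℚ (P : Set V) = ⊤) :
    (∀ F : AddSubmonoid V, IsMonoidFace P F →
      (P : Set V) ∩ rationalCone (F : Set V) = (F : Set V)) ∧
    (∀ G : Set V, IsConeFace (rationalCone (P : Set V)) G →
      rationalCone ((P : Set V) ∩ G) = G) :=
  faces_of_monoid_biject_faces_of_cone_general P
end

section
/- Let P be a finitely generated torsion-free commutative cancellative monoid, A = ⊕_{p∈P} A_p a Noetherian P-graded ring, and E = ⊕_{p∈P^gp} E_p a finitely generated P^gp-graded A-module. Then E has a filtration 0 = E₀ ⊂ E₁ ⊂ ⋯ ⊂ E_n = E with each Eᵢ/Eᵢ₋₁ ≅ A/𝔭ᵢ for homogeneous prime ideals 𝔭ᵢ ⊂ A. -/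
/-!
Since `G` is torsion-free, a cone `C ⊆ G` that is maximal (Zorn) satisfies `G = C ∪ -C`: if
neither `g` nor `-g` lies in `C`, maximality gives `n • g ∈ -C` and `m • g ∈ C` with `n, m > 0`,
so `(n * m) • g ∈ C ∩ -C = 0`. Thus `G` carries a total order compatible with addition.

Over a ring graded by a totally ordered cancellative monoid, primality of a homogeneous ideal may
be tested on homogeneous elements. So if `N ⊊ E` is a homogeneous submodule, a maximal member of
the colon ideals `N : x` with `x ∉ N` homogeneous is a homogeneous prime, `N ⊔ A x` is again
homogeneous, and `(N ⊔ A x) / N ≅ A / (N : x)`. Noetherian induction on `N` gives the filtration.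
-/

namespace AddGroupCone

variable {G : Type*} [AddCommGroup G]

theorem bddAbove_of_isChain {c : Set (AddGroupCone G)} (hc : IsChain (· ≤ ·) c)
    (hne : c.Nonempty) : BddAbove c := by
  have hdir : DirectedOn (· ≤ ·) (toAddSubmonoid '' c) :=
    (hc.image_of_map_rel _ _ toAddSubmonoid fun _ _ h ↦ h).directedOn
  have mem_sSup {a : G} : a ∈ sSup (toAddSubmonoid '' c) ↔ ∃ C ∈ c, a ∈ C := by
    simp only [AddSubmonoid.mem_sSup_of_directedOn (hne.image _) hdir, Set.exists_mem_image]
    rfl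
  refine ⟨⟨sSup (toAddSubmonoid '' c), fun ha hna ↦ ?_⟩, fun C hC a ha ↦ mem_sSup.mpr ⟨C, hC, ha⟩⟩
  obtain ⟨C₁, hC₁, ha⟩ := mem_sSup.mp ha
  obtain ⟨C₂, hC₂, hna⟩ := mem_sSup.mp hna
  rcases hc.total hC₁ hC₂ with h | h
  · exact eq_zero_of_mem_of_neg_mem (h ha) hna
  · exact eq_zero_of_mem_of_neg_mem ha (h hna)

theorem exists_nsmul_add_eq_zero_of_isMax {C : AddGroupCone G} (hC : IsMax C) {g : G}
    (hg : g ∉ C) : ∃ n ≠ 0, ∃ c ∈ C, n • g + c = 0 := by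
  by_contra! h
  let D : AddGroupCone G :=
    { toAddSubmonoid := C.toAddSubmonoid ⊔ .closure {g}
      eq_zero_of_mem_of_neg_mem' := by
        intro a ha hna
        obtain ⟨c, hc, _, hn, rfl⟩ := AddSubmonoid.mem_sup.mp ha
        obtain ⟨n, rfl⟩ := AddSubmonoid.mem_closure_singleton.mp hn
        obtain ⟨c', hc', _, hm, hsum⟩ := AddSubmonoid.mem_sup.mp hna
        obtain ⟨m, rfl⟩ := AddSubmonoid.mem_closure_singleton.mp hm
        rcases eq_or_ne (n + m) 0 with hnm | hnm
        · obtain ⟨rfl, rfl⟩ : n = 0 ∧ m = 0 := by omega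
          simp only [zero_smul, add_zero] at hsum ⊢
          exact C.eq_zero_of_mem_of_neg_mem' hc (hsum ▸ hc')
        · refine absurd ?_ (h _ hnm _ (add_mem hc hc'))
          rw [add_smul, show n • g + m • g + (c + c') = c + n • g + (c' + m • g) by abel, hsum,
            add_neg_cancel] }
  have hCD : C ≤ D := fun _ ↦ AddSubmonoid.mem_sup_left
  exact hg (hC hCD (AddSubmonoid.mem_sup_right (AddSubmonoid.subset_closure rfl)))

theorem hasMemOrNegMem_of_isMax [IsAddTorsionFree G] {C : AddGroupCone G} (hC : IsMax C) :
    HasMemOrNegMem C := by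
  refine ⟨fun g ↦ or_iff_not_imp_left.mpr fun hg ↦ by_contra fun hng ↦ hg ?_⟩
  obtain ⟨n, hn, c, hc, hnc⟩ := exists_nsmul_add_eq_zero_of_isMax hC hg
  obtain ⟨m, hm, d, hd, hmd⟩ := exists_nsmul_add_eq_zero_of_isMax hC hng
  have hdg : d = m • g := by rw [eq_neg_of_add_eq_zero_right hmd, smul_neg, neg_neg]
  have hnd : n • d = -(m • c) := by rw [hdg, smul_comm, eq_neg_of_add_eq_zero_left hnc, smul_neg]
  have hnd₀ : n • d = 0 :=
    eq_zero_of_mem_of_neg_mem (nsmul_mem hd n) (hnd ▸ (neg_neg (m • c)).symm ▸ nsmul_mem hc m)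
  have hg₀ : (n * m) • g = 0 := by rw [mul_smul, ← hdg, hnd₀]
  rw [(nsmul_eq_zero_iff_right (mul_ne_zero hn hm)).mp hg₀]
  exact zero_mem C

end AddGroupCone

theorem exists_linearOrder_isOrderedAddMonoid (G : Type*) [AddCommGroup G] [IsAddTorsionFree G] :
    ∃ _ : LinearOrder G, IsOrderedAddMonoid G := by
  classical
  have : Nonempty (AddGroupCone G) := ⟨⟨⊥, fun ha _ ↦ ha⟩⟩
  obtain ⟨C, hC⟩ :=
    zorn_le_nonempty fun (c : Set (AddGroupCone G)) ↦ AddGroupCone.bddAbove_of_isChain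
  have := AddGroupCone.hasMemOrNegMem_of_isMax hC
  exact ⟨LinearOrder.mkOfAddGroupCone C, IsOrderedAddMonoid.mkOfCone C⟩

open DirectSum SetLike

section Decomposition

variable {ι τ A E : Type*} [DecidableEq ι] [Semiring A] [AddCommMonoid E] [Module A E]
  [SetLike τ E] [AddSubmonoidClass τ E] (ℰ : ι → τ) [Decomposition ℰ]

theorem Submodule.isHomogeneous_bot : (⊥ : Submodule A E).IsHomogeneous ℰ := fun i x hx ↦ by
  simp [(Submodule.mem_bot A).mp hx]

theorem Submodule.IsHomogeneous.sup {N N' : Submodule A E} (hN : N.IsHomogeneous ℰ)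
    (hN' : N'.IsHomogeneous ℰ) : (N ⊔ N').IsHomogeneous ℰ := by
  intro i x hx
  obtain ⟨y, hy, z, hz, rfl⟩ := mem_sup.mp hx
  rw [decompose_add, DirectSum.add_apply, AddMemClass.coe_add]
  exact add_mem (mem_sup_left (hN i hy)) (mem_sup_right (hN' i hz))

theorem Submodule.isHomogeneous_span_singleton {σ : Type*} [AddMonoid ι] [SetLike σ A]
    [AddSubmonoidClass σ A] (𝒜 : ι → σ) [GradedRing 𝒜] [GradedSMul 𝒜 ℰ] {x : E} {i : ι}
    (hx : x ∈ ℰ i) : (span A {x}).IsHomogeneous ℰ := by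
  intro j y hy
  obtain ⟨a, rfl⟩ := mem_span_singleton.mp hy
  clear hy
  induction a using Decomposition.inductionOn 𝒜 generalizing j with
  | zero => simp
  | @homogeneous k a =>
    have hax : (a : A) • x ∈ ℰ (k + i) := GradedSMul.smul_mem a.2 hx
    rcases eq_or_ne j (k + i) with rfl | hj
    · rw [decompose_of_mem_same ℰ hax]
      exact smul_mem _ _ (mem_span_singleton_self x)
    · rw [decompose_of_mem_ne ℰ hax hj.symm]
      exact zero_mem _
  | add a b ha hb =>
    rw [add_smul, decompose_add, DirectSum.add_apply, AddMemClass.coe_add]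
    exact add_mem (ha j) (hb j)

variable {σ : Type*} [AddMonoid ι] [IsRightCancelAdd ι] [SetLike σ A] [AddSubmonoidClass σ A]
  (𝒜 : ι → σ) [GradedRing 𝒜] [GradedSMul 𝒜 ℰ]

theorem coe_decompose_smul_add_of_mem {x : E} {i : ι} (hx : x ∈ ℰ i) (a : A) (j : ι) :
    (decompose ℰ (a • x) (j + i) : E) = (decompose 𝒜 a j : A) • x := by
  induction a using Decomposition.inductionOn 𝒜 with
  | zero => simp
  | @homogeneous k a =>
    have hax : (a : A) • x ∈ ℰ (k + i) := GradedSMul.smul_mem a.2 hx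
    rcases eq_or_ne j k with rfl | hj
    · rw [decompose_of_mem_same ℰ hax, decompose_of_mem_same 𝒜 a.2]
    · rw [decompose_of_mem_ne ℰ hax fun h ↦ hj (add_right_cancel h).symm,
        decompose_of_mem_ne 𝒜 a.2 hj.symm, zero_smul]
  | add a b ha hb =>
    rw [add_smul, decompose_add, decompose_add, DirectSum.add_apply, DirectSum.add_apply,
      AddMemClass.coe_add, AddMemClass.coe_add, ha, hb, add_smul]

theorem Submodule.IsHomogeneous.colon_singleton {N : Submodule A E} (hN : N.IsHomogeneous ℰ)
    {x : E} {i : ι} (hx : x ∈ ℰ i) : (N.colon {x}).IsHomogeneous 𝒜 := by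
  intro j a ha
  rw [mem_colon_singleton] at ha ⊢
  rw [← coe_decompose_smul_add_of_mem ℰ 𝒜 hx]
  exact hN _ ha

end Decomposition

section Quotient

variable {A E : Type*} [CommRing A] [AddCommGroup E] [Module A E]

noncomputable def Submodule.quotSupSpanSingletonEquivQuotColon (N : Submodule A E) (x : E) :
    (↥(N ⊔ span A {x}) ⧸ N.submoduleOf (N ⊔ span A {x})) ≃ₗ[A] A ⧸ N.colon {x} :=
  let f : ↥(N ⊔ span A {x}) →ₗ[A] E ⧸ N := N.mkQ ∘ₗ (N ⊔ span A {x}).subtype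
  have hker : LinearMap.ker f = N.submoduleOf (N ⊔ span A {x}) := by
    rw [LinearMap.ker_comp, ker_mkQ]; rfl
  have hrange : LinearMap.range f = span A {N.mkQ x} := by
    rw [LinearMap.range_comp, range_subtype, map_sup, map_span, mkQ_map_self, bot_sup_eq,
      Set.image_singleton]
  have htorsion : Ideal.torsionOf A (E ⧸ N) (N.mkQ x) = N.colon {x} := by
    ext a
    rw [Ideal.mem_torsionOf_iff, mem_colon_singleton, mkQ_apply, ← Quotient.mk_smul,
      Quotient.mk_eq_zero]
  (quotEquivOfEq _ _ hker.symm).trans <| f.quotKerEquivRange.trans <|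
    (LinearEquiv.ofEq _ _ hrange).trans <|
    (Ideal.quotTorsionOfEquivSpanSingleton A _ _).symm.trans (quotEquivOfEq _ _ htorsion)

end Quotient

section Filtration

open Submodule

variable {ι σ τ A E : Type*} [AddCommMonoid ι] [LinearOrder ι] [IsOrderedCancelAddMonoid ι]
  [CommRing A] [AddCommGroup E] [Module A E] [SetLike σ A] [AddSubmonoidClass σ A]
  (𝒜 : ι → σ) [GradedRing 𝒜] [SetLike τ E] [AddSubmonoidClass τ E]

theorem Submodule.IsHomogeneous.isPrime_colon_singleton {ℰ : ι → τ} [Decomposition ℰ]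
    [GradedSMul 𝒜 ℰ] {N : Submodule A E} (hN : N.IsHomogeneous ℰ) {x : E} {i : ι}
    (hx : x ∈ ℰ i) (hxN : x ∉ N) (hmax : ∀ j, ∀ y ∈ ℰ j, y ∉ N → ¬ N.colon {x} < N.colon {y}) :
    (N.colon {x}).IsPrime := by
  refine (hN.colon_singleton ℰ 𝒜 hx).isPrime_of_homogeneous_mem_or_mem
    (fun h ↦ hxN (by simpa using mem_colon_singleton.mp (h ▸ Submodule.mem_top : (1 : A) ∈ _)))
    fun {c d} _ ⟨j, hd⟩ hcd ↦ or_iff_not_imp_right.mpr fun hdx ↦ ?_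
  rw [mem_colon_singleton] at hcd hdx
  have hle : N.colon {x} ≤ N.colon {d • x} := fun a ha ↦ by
    rw [mem_colon_singleton, smul_comm]
    exact N.smul_mem d (mem_colon_singleton.mp ha)
  rw [hle.eq_of_not_lt (hmax _ _ (GradedSMul.smul_mem hd hx) hdx), mem_colon_singleton, smul_smul]
  exact hcd

theorem Submodule.IsHomogeneous.exists_isPrime_colon_singleton [IsNoetherianRing A]
    {ℰ : ι → τ} [Decomposition ℰ] [GradedSMul 𝒜 ℰ] {N : Submodule A E}
    (hN : N.IsHomogeneous ℰ) (hN_ne_top : N ≠ ⊤) :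
    ∃ i, ∃ x ∈ ℰ i, x ∉ N ∧ (N.colon {x}).IsPrime ∧ (N.colon {x}).IsHomogeneous 𝒜 := by
  have hne : {I : Ideal A | ∃ i, ∃ x ∈ ℰ i, x ∉ N ∧ I = N.colon {x}}.Nonempty := by
    obtain ⟨y, hy⟩ := SetLike.exists_not_mem_of_ne_top N hN_ne_top
    obtain ⟨i, hi⟩ := not_forall.mp ((hN.mem_iff ℰ).not.mp hy)
    exact ⟨_, i, _, (decompose ℰ y i).2, hi, rfl⟩
  obtain ⟨_, ⟨i, x, hx, hxN, rfl⟩, hmax⟩ := set_has_maximal_iff_noetherian.mpr inferInstance _ hne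
  exact ⟨i, x, hx, hxN, hN.isPrime_colon_singleton 𝒜 hx hxN
    fun j y hy hyN ↦ hmax _ ⟨j, y, hy, hyN, rfl⟩, hN.colon_singleton ℰ 𝒜 hx⟩

def Submodule.IsQuotientEquivQuotientHomogeneousPrime (N₁ N₂ : Submodule A E) : Prop :=
  N₁ ≤ N₂ ∧ ∃ 𝔭 : Ideal A, 𝔭.IsPrime ∧ 𝔭.IsHomogeneous 𝒜 ∧
    Nonempty ((↥N₂ ⧸ N₁.submoduleOf N₂) ≃ₗ[A] A ⧸ 𝔭)

theorem exists_relSeries_isQuotientEquivQuotientHomogeneousPrime [IsNoetherianRing A]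
    [Module.Finite A E] (ℰ : ι → τ) [Decomposition ℰ] [GradedSMul 𝒜 ℰ] :
    ∃ s : RelSeries {(N₁, N₂) : Submodule A E × Submodule A E |
        N₁.IsQuotientEquivQuotientHomogeneousPrime 𝒜 N₂},
      s.head = ⊥ ∧ s.last = ⊤ := by
  refine (WellFoundedGT.induction_top (P := fun N : Submodule A E ↦
      N.IsHomogeneous ℰ ∧ ∃ s : RelSeries _, s.head = ⊥ ∧ s.last = N)
    ⟨⊥, isHomogeneous_bot ℰ, .singleton _ ⊥, rfl, rfl⟩ ?_).2
  rintro N hN_ne_top ⟨hN, s, hs_head, hs_last⟩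
  obtain ⟨i, x, hx, hxN, hprime, hhom⟩ := hN.exists_isPrime_colon_singleton 𝒜 hN_ne_top
  have hstep : N.IsQuotientEquivQuotientHomogeneousPrime 𝒜 (N ⊔ span A {x}) :=
    ⟨le_sup_left, _, hprime, hhom, ⟨N.quotSupSpanSingletonEquivQuotColon x⟩⟩
  exact ⟨N ⊔ span A {x}, left_lt_sup.mpr fun h ↦ hxN (h (mem_span_singleton_self x)),
    hN.sup ℰ (isHomogeneous_span_singleton ℰ 𝒜 hx), s.snoc (N ⊔ span A {x}) (by rwa [hs_last]),
    by simpa using hs_head, s.last_snoc _ _⟩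

end Filtration

theorem graded_prime_filtration_general
    {G : Type*} [AddCommGroup G] [DecidableEq G]
    (htf : ∀ (n : ℕ) (g : G), 0 < n → n • g = 0 → g = 0)
    (A : Type*) [CommRing A] [IsNoetherianRing A]
    (𝒜 : G → AddSubgroup A) [GradedRing 𝒜]
    (E : Type*) [AddCommGroup E] [Module A E] [Module.Finite A E]
    (ℰ : G → AddSubgroup E) [SetLike.GradedSMul 𝒜 ℰ] [DirectSum.Decomposition ℰ] :
    ∃ (n : ℕ) (M : Fin (n + 1) → Submodule A E), Monotone M ∧
      M 0 = ⊥ ∧ M (Fin.last n) = ⊤ ∧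
      ∀ i : Fin n, ∃ 𝔭 : Ideal A, 𝔭.IsPrime ∧ Ideal.IsHomogeneous 𝒜 𝔭 ∧
        Nonempty ((↥(M i.succ) ⧸ (Submodule.comap (M i.succ).subtype (M i.castSucc)))
          ≃ₗ[A] (A ⧸ 𝔭)) := by
  have : IsAddTorsionFree G := ⟨fun n hn a b hab ↦ sub_eq_zero.mp <|
    htf n _ (Nat.pos_of_ne_zero hn) (by rw [nsmul_sub, sub_eq_zero]; exact hab)⟩
  obtain ⟨_, _⟩ := exists_linearOrder_isOrderedAddMonoid G
  -- `GradedRing 𝒜` was elaborated with the given `DecidableEq G`, the lemmas with the order's.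
  obtain rfl : ‹DecidableEq G› = LinearOrder.toDecidableEq := Subsingleton.elim _ _
  obtain ⟨s, hs_head, hs_last⟩ := exists_relSeries_isQuotientEquivQuotientHomogeneousPrime 𝒜 ℰ
  exact ⟨s.length, s, Fin.monotone_iff_le_succ.mpr fun i ↦ (s.step i).1, hs_head, hs_last,
    fun i ↦ (s.step i).2⟩

/-- **Prime Filtration Theorem.** Let `P` be a finitely generated torsion-free commutative
cancellative monoid (realized as a submonoid of its Grothendieck group `G = P^gp`), let
`A = ⊕_{p ∈ P} A_p` be a Noetherian `P`-graded ring (graded by `G` with trivial components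
outside `P`), and let `E = ⊕_{g ∈ G} E_g` be a finitely generated `P^gp`-graded `A`-module.
Then `E` has a filtration `0 = E₀ ⊂ E₁ ⊂ ⋯ ⊂ E_n = E` with each `Eᵢ/Eᵢ₋₁ ≅ A/𝔭ᵢ` for
homogeneous prime ideals `𝔭ᵢ ⊂ A`. -/
theorem graded_prime_filtration
    {G : Type*} [AddCommGroup G] [DecidableEq G] (P : AddSubmonoid G) (hfg : P.FG)
    (htf : ∀ (n : ℕ) (g : G), 0 < n → n • g = 0 → g = 0)
    (A : Type*) [CommRing A] [IsNoetherianRing A]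
    (𝒜 : G → AddSubgroup A) [GradedRing 𝒜]
    (hP : ∀ g : G, g ∉ P → 𝒜 g = ⊥)
    (E : Type*) [AddCommGroup E] [Module A E] [Module.Finite A E]
    (ℰ : G → AddSubgroup E) [SetLike.GradedSMul 𝒜 ℰ] [DirectSum.Decomposition ℰ] :
    ∃ (n : ℕ) (M : Fin (n + 1) → Submodule A E), Monotone M ∧
      M 0 = ⊥ ∧ M (Fin.last n) = ⊤ ∧
      ∀ i : Fin n, ∃ 𝔭 : Ideal A, 𝔭.IsPrime ∧ Ideal.IsHomogeneous 𝒜 𝔭 ∧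
        Nonempty ((↥(M i.succ) ⧸ (Submodule.comap (M i.succ).subtype (M i.castSucc)))
          ≃ₗ[A] (A ⧸ 𝔭)) :=
  graded_prime_filtration_general htf A 𝒜 E ℰ
end

section
/- Let P be a finitely generated torsion-free commutative cancellative monoid. Every P-homogeneous prime ideal 𝔭 of the monoid algebra ℤ[P] is of the form (q) + (K), where (q) = 𝔭 ∩ ℤ is a prime ideal of ℤ and K = {p ∈ P : t^p ∈ 𝔭} is a prime ideal of the monoid P. -/
/-!
Since `t^p * t^q = t^(p+q)` and `t^0 = 1`, the monomials in a proper prime ideal `𝔭` of `R[P]`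
form a prime ideal `K` of `P`. A homogeneous element factors as `n * t^p`, so if it lies in `𝔭`
then `n ∈ 𝔭` or `t^p ∈ 𝔭`; hence every homogeneous generator of `𝔭` lies in `(𝔭 ∩ R) + (K)`.
-/

namespace AddMonoidAlgebra

variable {R P : Type*} [CommSemiring R] [AddCommMonoid P]

theorem algebraMap_mul_single_one (r : R) (p : P) :
    algebraMap R R[P] r * single p 1 = single p r := by
  rw [← Algebra.smul_def, smul_single', mul_one]

variable {I : Ideal R[P]}

theorem single_one_add_mem (p : P) {k : P} (hk : single k 1 ∈ I) : single (p + k) 1 ∈ I := by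
  simpa only [single_mul_single, one_mul] using I.mul_mem_left (single p 1) hk

theorem setOf_single_one_mem_ne_univ (hI : I ≠ ⊤) : {p : P | single p 1 ∈ I} ≠ Set.univ := by
  intro h
  have h0 : (0 : P) ∈ {p : P | single p (1 : R) ∈ I} := h ▸ Set.mem_univ 0
  exact hI (I.eq_top_of_isUnit_mem h0 isUnit_one)

theorem _root_.Ideal.IsPrime.single_one_mem_or_mem (hI : I.IsPrime) {p q : P}
    (h : single (p + q) 1 ∈ I) : single p 1 ∈ I ∨ single q (1 : R) ∈ I :=
  hI.mem_or_mem (by rwa [single_mul_single, one_mul])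

theorem _root_.Ideal.IsPrime.algebraMap_mem_or_single_one_mem (hI : I.IsPrime) {p : P} {r : R}
    (h : single p r ∈ I) : algebraMap R R[P] r ∈ I ∨ single p 1 ∈ I :=
  hI.mem_or_mem (by rwa [algebraMap_mul_single_one])

theorem _root_.Ideal.IsPrime.eq_span_algebraMap_union_single_one (hI : I.IsPrime)
    {S : Set R[P]} (hS : I = Ideal.span S) (hmono : ∀ f ∈ S, ∃ (r : R) (p : P), f = single p r) :
    I = Ideal.span (algebraMap R R[P] '' {r | algebraMap R R[P] r ∈ I} ∪
      (fun p => single p 1) '' {p | single p 1 ∈ I}) := by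
  apply le_antisymm
  · conv_lhs => rw [hS]
    refine Ideal.span_le.2 fun f hf => ?_
    obtain ⟨r, p, rfl⟩ := hmono f hf
    rw [← algebraMap_mul_single_one]
    rcases hI.algebraMap_mem_or_single_one_mem (hS ▸ Ideal.subset_span hf) with h | h
    · exact Ideal.mul_mem_right _ _ (Ideal.subset_span (Or.inl ⟨r, h, rfl⟩))
    · exact Ideal.mul_mem_left _ _ (Ideal.subset_span (Or.inr ⟨p, h, rfl⟩))
  · refine Ideal.span_le.2 ?_
    rintro f (⟨r, hr, rfl⟩ | ⟨p, hp, rfl⟩)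
    exacts [hr, hp]

end AddMonoidAlgebra

theorem homogeneous_prime_structure_general {P : Type*} [AddCancelCommMonoid P]
    (𝔭 : Ideal (AddMonoidAlgebra ℤ P)) (hprime : 𝔭.IsPrime)
    (hhom : ∃ S : Set (AddMonoidAlgebra ℤ P), 𝔭 = Ideal.span S ∧
      ∀ f ∈ S, ∃ (n : ℤ) (p : P), f = AddMonoidAlgebra.single p n) :
    -- `K` is an ideal of the monoid `P` ...
    (∀ p : P, ∀ k ∈ {p : P | (AddMonoidAlgebra.single p 1 : AddMonoidAlgebra ℤ P) ∈ 𝔭},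
      p + k ∈ {p : P | (AddMonoidAlgebra.single p 1 : AddMonoidAlgebra ℤ P) ∈ 𝔭}) ∧
    -- ... which is proper ...
    {p : P | (AddMonoidAlgebra.single p 1 : AddMonoidAlgebra ℤ P) ∈ 𝔭} ≠ Set.univ ∧
    -- ... and prime, ...
    (∀ p q : P, (AddMonoidAlgebra.single (p + q) 1 : AddMonoidAlgebra ℤ P) ∈ 𝔭 →
      (AddMonoidAlgebra.single p 1 : AddMonoidAlgebra ℤ P) ∈ 𝔭 ∨
      (AddMonoidAlgebra.single q 1 : AddMonoidAlgebra ℤ P) ∈ 𝔭) ∧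
    -- and `𝔭 = (q) + (K)` where `(q) = 𝔭 ∩ ℤ`:
    𝔭 = Ideal.span
      (((fun n : ℤ => (algebraMap ℤ (AddMonoidAlgebra ℤ P)) n) ''
          {n : ℤ | (algebraMap ℤ (AddMonoidAlgebra ℤ P)) n ∈ 𝔭}) ∪
        ((fun p : P => (AddMonoidAlgebra.single p 1 : AddMonoidAlgebra ℤ P)) ''
          {p : P | (AddMonoidAlgebra.single p 1 : AddMonoidAlgebra ℤ P) ∈ 𝔭})) := by
  obtain ⟨S, hS, hmono⟩ := hhom
  exact ⟨fun p _ hk => AddMonoidAlgebra.single_one_add_mem p hk,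
    AddMonoidAlgebra.setOf_single_one_mem_ne_univ hprime.ne_top,
    fun _ _ => hprime.single_one_mem_or_mem, hprime.eq_span_algebraMap_union_single_one hS hmono⟩

/-- Let `P` be a finitely generated torsion-free commutative cancellative monoid. Every
`P`-homogeneous prime ideal `𝔭` of the monoid algebra `ℤ[P]` is of the form `(q) + (K)`:
it is generated by `𝔭 ∩ ℤ` (automatically a prime ideal `(q)` of `ℤ`) together with the
monomials `t^k` for `k ∈ K = {p ∈ P | t^p ∈ 𝔭}`, and `K` is a prime ideal of the
monoid `P`. -/
theorem homogeneous_prime_structure {P : Type*} [AddCancelCommMonoid P]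
    (hfg : AddMonoid.FG P)
    (htf : ∀ (n : ℕ) (a b : P), 0 < n → n • a = n • b → a = b)
    (𝔭 : Ideal (AddMonoidAlgebra ℤ P)) (hprime : 𝔭.IsPrime)
    (hhom : ∃ S : Set (AddMonoidAlgebra ℤ P), 𝔭 = Ideal.span S ∧
      ∀ f ∈ S, ∃ (n : ℤ) (p : P), f = AddMonoidAlgebra.single p n) :
    -- `K` is an ideal of the monoid `P` ...
    (∀ p : P, ∀ k ∈ {p : P | (AddMonoidAlgebra.single p 1 : AddMonoidAlgebra ℤ P) ∈ 𝔭},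
      p + k ∈ {p : P | (AddMonoidAlgebra.single p 1 : AddMonoidAlgebra ℤ P) ∈ 𝔭}) ∧
    -- ... which is proper ...
    {p : P | (AddMonoidAlgebra.single p 1 : AddMonoidAlgebra ℤ P) ∈ 𝔭} ≠ Set.univ ∧
    -- ... and prime, ...
    (∀ p q : P, (AddMonoidAlgebra.single (p + q) 1 : AddMonoidAlgebra ℤ P) ∈ 𝔭 →
      (AddMonoidAlgebra.single p 1 : AddMonoidAlgebra ℤ P) ∈ 𝔭 ∨
      (AddMonoidAlgebra.single q 1 : AddMonoidAlgebra ℤ P) ∈ 𝔭) ∧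
    -- and `𝔭 = (q) + (K)` where `(q) = 𝔭 ∩ ℤ`:
    𝔭 = Ideal.span
      (((fun n : ℤ => (algebraMap ℤ (AddMonoidAlgebra ℤ P)) n) ''
          {n : ℤ | (algebraMap ℤ (AddMonoidAlgebra ℤ P)) n ∈ 𝔭}) ∪
        ((fun p : P => (AddMonoidAlgebra.single p 1 : AddMonoidAlgebra ℤ P)) ''
          {p : P | (AddMonoidAlgebra.single p 1 : AddMonoidAlgebra ℤ P) ∈ 𝔭})) :=
  homogeneous_prime_structure_general 𝔭 hprime hhom
end

section
/- If P is a finitely generated torsion-free commutative cancellative monoid and N is a finitely generated combinatorial ℤ[P]-module, then N has a filtration 0 = N₀ ⊂ N₁ ⊂ ⋯ ⊂ N_n = N with each Nᵢ/Nᵢ₋₁ ≅ ℤ[P]/(K) for some prime ideal K ⊂ P. -/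
open AddMonoidAlgebra

/-- `ℤ[P] → ℤ[P^gp]` makes the group algebra an algebra over the monoid algebra. -/
noncomputable instance monoidAlgebraTowerAlgebra {G : Type*} [AddCommGroup G]
    (P : AddSubmonoid G) : Algebra (AddMonoidAlgebra ℤ ↥P) (AddMonoidAlgebra ℤ G) :=
  (AddMonoidAlgebra.mapDomainRingHom ℤ P.subtype).toAlgebra

/-- A sub-`P`-set of `P^gp`: a subset `A ⊆ G` with `P + A = A`. -/
def IsSubPSet {G : Type*} [AddCommGroup G] (P : AddSubmonoid G) (A : Set G) : Prop :=
  ∀ p ∈ P, ∀ a ∈ A, p + a ∈ A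

/-- The `ℤ[P]`-submodule `(A)` of `ℤ[P^gp]` spanned by the monomials `t^a`, `a ∈ A`. -/
noncomputable def monomialSpan {G : Type*} [AddCommGroup G] (P : AddSubmonoid G)
    (A : Set G) : Submodule (AddMonoidAlgebra ℤ ↥P) (AddMonoidAlgebra ℤ G) :=
  Submodule.span (AddMonoidAlgebra ℤ ↥P)
    ((fun a : G => (AddMonoidAlgebra.single a 1 : AddMonoidAlgebra ℤ G)) '' A)

/-- The monomial ideal `(K)` of `ℤ[P]` generated by `t^k`, `k ∈ K ⊆ P`. -/
noncomputable def monomialIdeal {G : Type*} [AddCommGroup G] (P : AddSubmonoid G)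
    (K : Set G) : Ideal (AddMonoidAlgebra ℤ ↥P) :=
  Ideal.span ((fun p : ↥P => (AddMonoidAlgebra.single p 1 : AddMonoidAlgebra ℤ ↥P)) ''
    {p : ↥P | (p : G) ∈ K})

/-- `K` is a prime ideal of the monoid `P` (as a subset of `G`): a proper ideal of `P`
such that `p + q ∈ K` implies `p ∈ K` or `q ∈ K`.  The empty ideal is allowed. -/
def IsMonoidPrime {G : Type*} [AddCommGroup G] (P : AddSubmonoid G) (K : Set G) : Prop :=
  K ⊆ (P : Set G) ∧ (∀ p ∈ P, ∀ k ∈ K, p + k ∈ K) ∧ K ≠ (P : Set G) ∧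
    ∀ p ∈ P, ∀ q ∈ P, p + q ∈ K → p ∈ K ∨ q ∈ K

/-!
Inside `N = (A)/(B)` consider the submodules `(C)/(B)` for sub-`P`-sets `B ⊆ C ⊆ A`. If `C ≠ A`,
choose `x ∈ A \ C` whose colon ideal `(C : x) = {p ∈ P | p + x ∈ C}` is maximal; this is possible
because `ℤ[P]` is Noetherian and `K ↦ (K)` is injective on monoid ideals, and a maximal colon ideal
is prime. Adding `P + x` to `C` enlarges `(C)/(B)` by the cyclic module generated by `t^x`, which is
`ℤ[P]/(C : x)` because `r t^x ∈ (C)` exactly when the support of `r` lies in `(C : x)`. As `N` is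
Noetherian, iterating from `C = B` reaches `C = A` after finitely many steps.
-/

noncomputable def Submodule.quotSupSpanSingletonEquiv {R N : Type*} [CommRing R] [AddCommGroup N]
    [Module R N] (M : Submodule R N) (e : N) :
    (↥(M ⊔ R ∙ e) ⧸ Submodule.comap (M ⊔ R ∙ e).subtype M) ≃ₗ[R] R ⧸ M.colon {e} :=
  let ψ := (Submodule.comap (M ⊔ R ∙ e).subtype M).mkQ ∘ₗ
    LinearMap.toSpanSingleton R _ ⟨e, Submodule.mem_sup_right (Submodule.mem_span_singleton_self e)⟩
  have hker : LinearMap.ker ψ = M.colon {e} := by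
    ext r
    simp [ψ]
  have hsurj : Function.Surjective ψ := by
    rintro ⟨z, hz⟩
    obtain ⟨m, hm, _, hre, rfl⟩ := Submodule.mem_sup.1 hz
    obtain ⟨r, rfl⟩ := Submodule.mem_span_singleton.1 hre
    refine ⟨r, (Submodule.Quotient.eq _).2 ?_⟩
    simpa using M.neg_mem hm
  ((Submodule.quotEquivOfEq _ _ hker.symm).trans (ψ.quotKerEquivOfSurjective hsurj)).symm

section CombinatorialModules

variable {G : Type*} [AddCommGroup G] {P : AddSubmonoid G}

theorem smul_single_one (r : AddMonoidAlgebra ℤ P) (a : G) :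
    r • single a (1 : ℤ) = mapDomain (fun p : P => (p : G) + a) r := by
  induction r using AddMonoidAlgebra.induction_linear with
  | zero => simp
  | add r s hr hs => rw [add_smul, hr, hs, mapDomain_add]
  | single p c =>
    change mapDomainRingHom ℤ P.subtype (single p c) * single a 1 = _
    simp

theorem support_smul_single_one [DecidableEq G] (r : AddMonoidAlgebra ℤ P) (a : G) :
    (r • single a (1 : ℤ)).coeff.support = r.coeff.support.image fun p : P => (p : G) + a := by
  rw [smul_single_one, coeff_mapDomain]
  exact Finsupp.mapDomain_support_of_injective
    (fun p q h => Subtype.coe_injective (add_right_cancel h)) _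

theorem monomialSpan_mono {A B : Set G} (h : A ⊆ B) : monomialSpan P A ≤ monomialSpan P B :=
  Submodule.span_mono (Set.image_mono h)

theorem single_mem_monomialSpan {A : Set G} {a : G} (ha : a ∈ A) :
    single a (1 : ℤ) ∈ monomialSpan P A :=
  Submodule.subset_span (Set.mem_image_of_mem _ ha)

theorem monomialSpan_union (C D : Set G) :
    monomialSpan P (C ∪ D) = monomialSpan P C ⊔ monomialSpan P D := by
  rw [monomialSpan, Set.image_union, Submodule.span_union]; rfl

theorem monomialSpan_image_add_right (x : G) :
    monomialSpan P ((· + x) '' P) = AddMonoidAlgebra ℤ P ∙ single x (1 : ℤ) := by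
  refine le_antisymm (Submodule.span_le.2 ?_) ?_
  · rintro _ ⟨_, ⟨p, hp, rfl⟩, rfl⟩
    refine Submodule.mem_span_singleton.2 ⟨single ⟨p, hp⟩ 1, ?_⟩
    simp [smul_single_one]
  · exact (Submodule.span_singleton_le_iff_mem _ _).2
      (Submodule.subset_span (Set.mem_image_of_mem _
        (⟨0, P.zero_mem, zero_add x⟩ : x ∈ (· + x) '' (P : Set G))))

theorem mem_monomialSpan_iff {A : Set G} (hA : IsSubPSet P A) {x : AddMonoidAlgebra ℤ G} :
    x ∈ monomialSpan P A ↔ ∀ g ∈ x.coeff.support, g ∈ A := by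
  classical
  constructor
  · intro hx
    induction hx using Submodule.span_induction with
    | mem y hy =>
      obtain ⟨a, ha, rfl⟩ := hy
      intro g hg
      rwa [Finset.mem_singleton.1 (Finsupp.support_single_subset hg)]
    | zero => simp
    | add y z _ _ hy hz =>
      intro g hg
      exact (Finset.mem_union.1 (Finsupp.support_add hg)).elim (hy g) (hz g)
    | smul r y _ hy =>
      intro g hg
      obtain ⟨u, hu, v, hv, rfl⟩ := Finset.mem_add.1 (support_coeff_mul_subset _ _ hg)
      obtain ⟨p, -, rfl⟩ := Finset.mem_image.1 (Finsupp.mapDomain_support hu)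
      exact hA _ p.2 _ (hy v hv)
  · intro h
    rw [← x.sum_coeff_single]
    refine Submodule.sum_mem _ fun g hg => ?_
    rw [← mul_one (x.coeff g), ← smul_single']
    exact zsmul_mem (single_mem_monomialSpan (h g hg)) _

theorem mem_monomialIdeal_iff {K : Set G} (hK : IsSubPSet P K) {r : AddMonoidAlgebra ℤ P} :
    r ∈ monomialIdeal P K ↔ ∀ p ∈ r.coeff.support, (p : G) ∈ K := by
  refine mem_ideal_span_of'_image.trans (forall₂_congr fun p _ => ⟨?_, fun hp => ⟨p, hp, 0, ?_⟩⟩)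
  · rintro ⟨q, hq, d, rfl⟩
    exact hK _ d.2 _ hq
  · rw [zero_add]

theorem single_one_mem_monomialIdeal_iff {K : Set G} (hK : IsSubPSet P K) (p : P) :
    single p (1 : ℤ) ∈ monomialIdeal P K ↔ (p : G) ∈ K := by
  simp [mem_monomialIdeal_iff hK]

theorem monomialIdeal_mono {K K' : Set G} (h : K ⊆ K') : monomialIdeal P K ≤ monomialIdeal P K' :=
  Ideal.span_mono (Set.image_mono fun _ hp => h hp)

variable (P) in
/-- `(C : x)`, the monomial annihilator of `t^x` modulo `(C)`. -/
def monoidColon (C : Set G) (x : G) : Set G := {p | p ∈ P ∧ p + x ∈ C}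

theorem isSubPSet_monoidColon {C : Set G} (hC : IsSubPSet P C) (x : G) :
    IsSubPSet P (monoidColon P C x) := by
  rintro p hp q ⟨hq, hqx⟩
  exact ⟨P.add_mem hp hq, by simpa only [add_assoc] using hC p hp _ hqx⟩

theorem monoidColon_subset_add {C : Set G} (hC : IsSubPSet P C) {p : G} (hp : p ∈ P) (x : G) :
    monoidColon P C x ⊆ monoidColon P C (p + x) := by
  rintro q ⟨hq, hqx⟩
  exact ⟨hq, by simpa only [add_left_comm] using hC p hp _ hqx⟩

theorem smul_single_mem_monomialSpan_iff {C : Set G} (hC : IsSubPSet P C)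
    (r : AddMonoidAlgebra ℤ P) (x : G) :
    r • single x (1 : ℤ) ∈ monomialSpan P C ↔ r ∈ monomialIdeal P (monoidColon P C x) := by
  classical
  rw [mem_monomialSpan_iff hC, mem_monomialIdeal_iff (isSubPSet_monoidColon hC x),
    support_smul_single_one, Finset.forall_mem_image]
  exact forall₂_congr fun p _ => ⟨fun h => ⟨p.2, h⟩, And.right⟩

/-- If `p + q ∈ (C : x)` with `p ∉ (C : x)`, then `(C : p + x)` contains `(C : x)` and also `q`,
so maximality forces `q ∈ (C : x)`. -/
theorem isMonoidPrime_monoidColon {A C : Set G} (hA : IsSubPSet P A) (hC : IsSubPSet P C)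
    {x : G} (hxA : x ∈ A) (hxC : x ∉ C)
    (hmax : ∀ y ∈ A, y ∉ C →
      ¬ monomialIdeal P (monoidColon P C x) < monomialIdeal P (monoidColon P C y)) :
    IsMonoidPrime P (monoidColon P C x) := by
  refine ⟨fun _ h => h.1, isSubPSet_monoidColon hC x, fun h => hxC ?_, ?_⟩
  · have h0 : (0 : G) ∈ monoidColon P C x := h ▸ P.zero_mem
    simpa using h0.2
  · intro p hp q hq hpq
    by_contra! hcon
    have hpx : p + x ∉ C := fun h => hcon.1 ⟨hp, h⟩
    have hq' : q ∈ monoidColon P C (p + x) :=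
      ⟨hq, by simpa only [add_assoc, add_comm q] using hpq.2⟩
    refine hmax (p + x) (hA p hp x hxA) hpx (SetLike.lt_iff_le_and_exists.2
      ⟨monomialIdeal_mono (monoidColon_subset_add hC hp x), single ⟨q, hq⟩ 1, ?_, ?_⟩)
    · exact (single_one_mem_monomialIdeal_iff (isSubPSet_monoidColon hC _) _).2 hq'
    · exact mt (single_one_mem_monomialIdeal_iff (isSubPSet_monoidColon hC _) _).1 hcon.2

theorem exists_isMonoidPrime_monoidColon [IsNoetherianRing (AddMonoidAlgebra ℤ P)]
    {A C : Set G} (hA : IsSubPSet P A) (hC : IsSubPSet P C) (hAC : ¬ A ⊆ C) :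
    ∃ x ∈ A, x ∉ C ∧ IsMonoidPrime P (monoidColon P C x) := by
  obtain ⟨_, ⟨x, ⟨hxA, hxC⟩, rfl⟩, hmax⟩ := set_has_maximal_iff_noetherian.2 inferInstance
    ((fun y => monomialIdeal P (monoidColon P C y)) '' (A \ C))
    ((Set.sdiff_nonempty.2 hAC).image _)
  exact ⟨x, hxA, hxC, isMonoidPrime_monoidColon hA hC hxA hxC fun y hyA hyC =>
    hmax _ (Set.mem_image_of_mem _ ⟨hyA, hyC⟩)⟩

variable (P)

abbrev CombinatorialModule (A B : Set G) : Type _ :=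
  ↥(monomialSpan P A) ⧸ Submodule.comap (monomialSpan P A).subtype (monomialSpan P B)

/-- The image of `(C)` in `(A)/(B)`; it is `(C)/(B)` when `B ⊆ C ⊆ A`. -/
noncomputable def monomialSubmodule (A B C : Set G) :
    Submodule (AddMonoidAlgebra ℤ P) (CombinatorialModule P A B) :=
  (Submodule.comap (monomialSpan P A).subtype (monomialSpan P C)).map (Submodule.mkQ _)

def primeFiltrationStep (N : Type*) [AddCommGroup N] [Module (AddMonoidAlgebra ℤ P) N] :
    SetRel (Submodule (AddMonoidAlgebra ℤ P) N) (Submodule (AddMonoidAlgebra ℤ P) N) :=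
  {M | M.1 ≤ M.2 ∧ ∃ K : Set G, IsMonoidPrime P K ∧
    Nonempty ((↥M.2 ⧸ Submodule.comap M.2.subtype M.1) ≃ₗ[AddMonoidAlgebra ℤ P]
      (AddMonoidAlgebra ℤ P ⧸ monomialIdeal P K))}

variable {P} {A B C : Set G}

theorem mk_mem_monomialSubmodule_iff (hBC : B ⊆ C) (z : monomialSpan P A) :
    (Submodule.Quotient.mk z : CombinatorialModule P A B) ∈ monomialSubmodule P A B C ↔
      (z : AddMonoidAlgebra ℤ G) ∈ monomialSpan P C := by
  rw [monomialSubmodule, ← Submodule.mkQ_apply, ← Submodule.mem_comap, Submodule.comap_map_mkQ,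
    sup_eq_right.2 (Submodule.comap_mono (monomialSpan_mono (P := P) hBC))]
  rfl

theorem monomialSubmodule_mono {C' : Set G} (h : C ⊆ C') :
    monomialSubmodule P A B C ≤ monomialSubmodule P A B C' :=
  Submodule.map_mono (Submodule.comap_mono (monomialSpan_mono h))

theorem monomialSubmodule_self : monomialSubmodule P A B B = ⊥ :=
  Submodule.mkQ_map_self _

theorem monomialSubmodule_eq_top (hAC : A ⊆ C) : monomialSubmodule P A B C = ⊤ := by
  rw [monomialSubmodule, Submodule.comap_subtype_eq_top.2 (monomialSpan_mono (P := P) hAC),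
    Submodule.map_top, Submodule.range_mkQ]

theorem monomialSubmodule_union_image_add (hBC : B ⊆ C) {x : G} (hxA : x ∈ A) :
    monomialSubmodule P A B (C ∪ (· + x) '' P) = monomialSubmodule P A B C ⊔
      AddMonoidAlgebra ℤ P ∙ Submodule.Quotient.mk ⟨single x 1, single_mem_monomialSpan hxA⟩ := by
  set e : monomialSpan P A := ⟨single x 1, single_mem_monomialSpan hxA⟩
  have hBC' : B ⊆ C ∪ (· + x) '' P := hBC.trans Set.subset_union_left
  refine le_antisymm ?_ (sup_le (monomialSubmodule_mono Set.subset_union_left) ?_)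
  · rintro _ ⟨z, hz, rfl⟩
    have hz' : (z : AddMonoidAlgebra ℤ G) ∈ monomialSpan P (C ∪ (· + x) '' P) := hz
    rw [monomialSpan_union, monomialSpan_image_add_right] at hz'
    obtain ⟨u, hu, _, hv, huv⟩ := Submodule.mem_sup.1 hz'
    obtain ⟨r, rfl⟩ := Submodule.mem_span_singleton.1 hv
    have hsplit : (Submodule.mkQ _ z : CombinatorialModule P A B) =
        Submodule.Quotient.mk (z - r • e) + r • Submodule.Quotient.mk e := by
      simp
    rw [hsplit]
    refine Submodule.add_mem_sup ((mk_mem_monomialSubmodule_iff hBC _).2 ?_)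
      (Submodule.smul_mem _ _ (Submodule.mem_span_singleton_self _))
    simpa [← huv, e] using hu
  · exact (Submodule.span_singleton_le_iff_mem _ _).2 ((mk_mem_monomialSubmodule_iff hBC' _).2
      (single_mem_monomialSpan (Or.inr ⟨0, P.zero_mem, zero_add x⟩)))

theorem monomialSubmodule_colon_mk_single (hC : IsSubPSet P C) (hBC : B ⊆ C) {x : G} (hxA : x ∈ A) :
    (monomialSubmodule P A B C).colon
        {Submodule.Quotient.mk ⟨single x 1, single_mem_monomialSpan hxA⟩} =
      monomialIdeal P (monoidColon P C x) := by
  ext r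
  rw [Submodule.mem_colon_singleton, ← Submodule.Quotient.mk_smul,
    mk_mem_monomialSubmodule_iff hBC, ← smul_single_mem_monomialSpan_iff hC]
  rfl

theorem exists_primeFiltrationStep [IsNoetherianRing (AddMonoidAlgebra ℤ P)]
    (hA : IsSubPSet P A) (hC : IsSubPSet P C) (hBC : B ⊆ C) (hCA : C ⊆ A) (hAC : ¬ A ⊆ C) :
    ∃ C', IsSubPSet P C' ∧ B ⊆ C' ∧ C' ⊆ A ∧
      monomialSubmodule P A B C < monomialSubmodule P A B C' ∧
      (monomialSubmodule P A B C, monomialSubmodule P A B C') ∈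
        primeFiltrationStep P (CombinatorialModule P A B) := by
  obtain ⟨x, hxA, hxC, hK⟩ := exists_isMonoidPrime_monoidColon hA hC hAC
  have hC' : IsSubPSet P (C ∪ (· + x) '' P) := by
    rintro p hp _ (hc | ⟨q, hq, rfl⟩)
    · exact Or.inl (hC p hp _ hc)
    · exact Or.inr ⟨p + q, P.add_mem hp hq, add_assoc p q x⟩
  refine ⟨C ∪ (· + x) '' P, hC', hBC.trans Set.subset_union_left,
    Set.union_subset hCA (Set.image_subset_iff.2 fun p hp => hA p hp x hxA), ?_, ?_⟩
  · rw [monomialSubmodule_union_image_add hBC hxA, Submodule.lt_sup_iff_notMem,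
      mk_mem_monomialSubmodule_iff hBC, mem_monomialSpan_iff hC]
    exact fun h => hxC (h x (by simp))
  · rw [monomialSubmodule_union_image_add hBC hxA]
    exact ⟨le_sup_left, _, hK, ⟨(Submodule.quotSupSpanSingletonEquiv _ _).trans
      (Submodule.quotEquivOfEq _ _ (monomialSubmodule_colon_mk_single hC hBC hxA))⟩⟩

theorem exists_relSeries_primeFiltrationStep [IsNoetherianRing (AddMonoidAlgebra ℤ P)]
    [IsNoetherian (AddMonoidAlgebra ℤ P) (CombinatorialModule P A B)]
    (hA : IsSubPSet P A) (hC : IsSubPSet P C) (hBC : B ⊆ C) (hCA : C ⊆ A) :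
    ∃ s : RelSeries (primeFiltrationStep P (CombinatorialModule P A B)),
      s.head = monomialSubmodule P A B C ∧ s.last = ⊤ := by
  induction hM : monomialSubmodule P A B C using WellFoundedGT.induction generalizing C with
  | _ M ih =>
    by_cases hAC : A ⊆ C
    · exact ⟨RelSeries.singleton _ M, rfl, hM ▸ monomialSubmodule_eq_top hAC⟩
    · obtain ⟨C', hC', hBC', hC'A, hlt, hstep⟩ := exists_primeFiltrationStep hA hC hBC hCA hAC
      obtain ⟨s, hs, hlast⟩ := ih _ (hM ▸ hlt) hC' hBC' hC'A rfl
      exact ⟨s.cons M (hM ▸ hs ▸ hstep), rfl, by rwa [RelSeries.last_cons]⟩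

end CombinatorialModules

theorem combinatorial_module_prime_filtration_general {G : Type*} [AddCommGroup G]
    (P : AddSubmonoid G) (hfg : P.FG)
    (A B : Set G) (hA : IsSubPSet P A) (hB : IsSubPSet P B) (hBA : B ⊆ A)
    (hfin : Module.Finite (AddMonoidAlgebra ℤ ↥P)
      (↥(monomialSpan P A) ⧸
        (Submodule.comap (monomialSpan P A).subtype (monomialSpan P B)))) :
    ∃ (n : ℕ) (N : Fin (n + 1) → Submodule (AddMonoidAlgebra ℤ ↥P)
        (↥(monomialSpan P A) ⧸
          (Submodule.comap (monomialSpan P A).subtype (monomialSpan P B)))),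
      Monotone N ∧ N 0 = ⊥ ∧ N (Fin.last n) = ⊤ ∧
      ∀ i : Fin n, ∃ K : Set G, IsMonoidPrime P K ∧
        Nonempty ((↥(N i.succ) ⧸ (Submodule.comap (N i.succ).subtype (N i.castSucc)))
          ≃ₗ[AddMonoidAlgebra ℤ ↥P]
          (AddMonoidAlgebra ℤ ↥P ⧸ monomialIdeal P K)) := by
  have : AddMonoid.FG P := (AddMonoid.fg_iff_addSubmonoid_fg P).2 hfg
  have : IsNoetherianRing (AddMonoidAlgebra ℤ P) := Algebra.FiniteType.isNoetherianRing ℤ _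
  have : IsNoetherian (AddMonoidAlgebra ℤ P) (CombinatorialModule P A B) :=
    isNoetherian_of_isNoetherianRing_of_finite _ _
  obtain ⟨s, hhead, hlast⟩ := exists_relSeries_primeFiltrationStep hA hB subset_rfl hBA
  refine ⟨s.length, s, Fin.monotone_iff_le_succ.2 fun i => (s.step i).1, ?_, hlast,
    fun i => (s.step i).2⟩
  rw [← RelSeries.head, hhead, monomialSubmodule_self]

/-- If `P` is a finitely generated torsion-free commutative cancellative monoid (realized
as a submonoid of its Grothendieck group `G`) and `N = (A)/(B)` is a finitely generated
combinatorial `ℤ[P]`-module, then `N` has a filtration `0 = N₀ ⊂ ⋯ ⊂ N_n = N` with each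
`Nᵢ/Nᵢ₋₁ ≅ ℤ[P]/(K)` for some prime ideal `K ⊂ P`. -/
theorem combinatorial_module_prime_filtration {G : Type*} [AddCommGroup G]
    (P : AddSubmonoid G) (hfg : P.FG)
    (hgen : ∀ g : G, ∃ p ∈ P, ∃ q ∈ P, g = p - q)
    (htf : ∀ (n : ℕ) (g : G), 0 < n → n • g = 0 → g = 0)
    (A B : Set G) (hA : IsSubPSet P A) (hB : IsSubPSet P B) (hBA : B ⊆ A)
    (hfin : Module.Finite (AddMonoidAlgebra ℤ ↥P)
      (↥(monomialSpan P A) ⧸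
        (Submodule.comap (monomialSpan P A).subtype (monomialSpan P B)))) :
    ∃ (n : ℕ) (N : Fin (n + 1) → Submodule (AddMonoidAlgebra ℤ ↥P)
        (↥(monomialSpan P A) ⧸
          (Submodule.comap (monomialSpan P A).subtype (monomialSpan P B)))),
      Monotone N ∧ N 0 = ⊥ ∧ N (Fin.last n) = ⊤ ∧
      ∀ i : Fin n, ∃ K : Set G, IsMonoidPrime P K ∧
        Nonempty ((↥(N i.succ) ⧸ (Submodule.comap (N i.succ).subtype (N i.castSucc)))
          ≃ₗ[AddMonoidAlgebra ℤ ↥P]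
          (AddMonoidAlgebra ℤ ↥P ⧸ monomialIdeal P K)) :=
  combinatorial_module_prime_filtration_general P hfg A B hA hB hBA hfin
end
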